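/- Let P = (1/2)P₁ + (1/2)P₂ where P₁ is uniform on [0, 1/2] and P₂ is the uniform discrete measure on D = {2/3, 5/6, 1}. For every n ≥ 5, the set α_{n−3}(P₁) ∪ D, where α_{n−3}(P₁) = {(2i−1)/(4(n−3)) : 1 ≤ i ≤ n−3} is the optimal set of (n−3)-means for P₁, is an optimal set of n-means for P, and V_n(P) = (1/2)V_{n−3}(P₁) = 1/(96(n−3)²). -/

import Mathlib

open MeasureTheory Set Filter Real
open scoped ENNReal

/-- Distortion error of a finite set of quantizers `γ` for the measure `P`. -/
noncomputable def distortion (P : Measure ℝ) (γ : Finset ℝ) : ℝ :=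
  ∫ x, (⨅ c : γ, (x - (c : ℝ)) ^ 2) ∂P

/-- The `n`-th quantization error of `P`. -/
noncomputable def quantErr (P : Measure ℝ) (n : ℕ) : ℝ :=
  sInf {v : ℝ | ∃ γ : Finset ℝ, γ.Nonempty ∧ γ.card ≤ n ∧ v = distortion P γ}

/-- `γ` is an optimal set of `n`-means for `P`. -/
def IsOptimalSet (P : Measure ℝ) (n : ℕ) (γ : Finset ℝ) : Prop :=
  γ.Nonempty ∧ γ.card ≤ n ∧ distortion P γ = quantErr P n

/-- Uniform distribution on `[a, b]`. -/
noncomputable def unif (a b : ℝ) : Measure ℝ :=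
  (ENNReal.ofReal (b - a))⁻¹ • (volume.restrict (Icc a b))

/-- The uniform discrete measure on `{2/3, 5/6, 1}`. -/
noncomputable def discD : Measure ℝ :=
  (3 : ℝ≥0∞)⁻¹ • (Measure.dirac (2/3) + Measure.dirac (5/6) + Measure.dirac 1)

/-- Mixture `(1/2)P₁ + (1/2)P₂`. -/
noncomputable def mix (P₁ P₂ : Measure ℝ) : Measure ℝ :=
  (2 : ℝ≥0∞)⁻¹ • P₁ + (2 : ℝ≥0∞)⁻¹ • P₂

/-!
For the upper bound, the midpoints of `m` equal cells of `[0, 1/2]` cost `1/(96 m²)` for the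
uniform part, and the atoms are centres.

For the lower bound we use, for `S ≥ 0` and a nonempty set of centres `γ`, the pointwise inequality
`min_{c ∈ γ} (x - c)² ≥ S² - ∑_{c ∈ γ} (S² - (x - c)²)⁺`. Each bump has integral at most `4S³/3`,
at most `2S³/3` over an interval lying to the left of its centre, and `0` there if the centre is
at distance `≥ S`; with `S = (b - a)/(2k)` this gives the classical bound `(b - a)³/(12k²)` for
`k` centres on `[a, b]`. For the mixture, centres to the right of `1/2` act on `[0, 1/2]` only
through the leftmost one. Either at most `m - 1` centres lie in `[0, 1/2]`, or the atoms cost at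
least `1/72` (two atoms share a centre, or one is served from `[0, 1/2]`), or exactly three centres
`c₁ < c₂ < c₃` lie to the right of `1/2`, and then the bump of `c₁` is paid for by the error
`(2/3 - c₁)²` at the atom `2/3`.
-/
noncomputable def minSqDist (γ : Finset ℝ) (x : ℝ) : ℝ := ⨅ c : γ, (x - (c : ℝ)) ^ 2

lemma distortion_eq_integral (P : Measure ℝ) (γ : Finset ℝ) :
    distortion P γ = ∫ x, minSqDist γ x ∂P := rfl

lemma minSqDist_nonneg (γ : Finset ℝ) (x : ℝ) : 0 ≤ minSqDist γ x :=
  Real.iInf_nonneg fun _ => sq_nonneg _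

lemma minSqDist_le {γ : Finset ℝ} {c : ℝ} (hc : c ∈ γ) (x : ℝ) : minSqDist γ x ≤ (x - c) ^ 2 :=
  ciInf_le (Set.finite_range _).bddBelow (⟨c, hc⟩ : γ)

lemma exists_minSqDist_eq {γ : Finset ℝ} (hγ : γ.Nonempty) (x : ℝ) :
    ∃ c ∈ γ, minSqDist γ x = (x - c) ^ 2 := by
  have : Nonempty γ := hγ.to_subtype
  obtain ⟨⟨c, hc⟩, h⟩ := exists_eq_ciInf_of_finite (f := fun c : γ => (x - (c : ℝ)) ^ 2)
  exact ⟨c, hc, h.symm⟩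

lemma continuous_minSqDist {γ : Finset ℝ} (hγ : γ.Nonempty) : Continuous (minSqDist γ) := by
  have h : minSqDist γ = fun x => γ.inf' hγ (fun c => (x - c) ^ 2) := by
    ext x
    obtain ⟨c, hc, hx⟩ := exists_minSqDist_eq hγ x
    refine le_antisymm (Finset.le_inf' _ _ fun c hc => minSqDist_le hc x) ?_
    exact hx ▸ Finset.inf'_le _ hc
  rw [h]
  exact Continuous.finset_inf'_apply hγ fun c _ => by fun_prop

lemma le_of_minSqDist_eq {γ : Finset ℝ} {x y a b : ℝ} (hxy : x < y) (ha : a ∈ γ) (hb : b ∈ γ)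
    (hxa : minSqDist γ x = (x - a) ^ 2) (hyb : minSqDist γ y = (y - b) ^ 2) : a ≤ b := by
  have hx := minSqDist_le hb x
  have hy := minSqDist_le ha y
  by_contra! hba
  nlinarith [mul_pos (sub_pos.2 hxy) (sub_pos.2 hba)]

noncomputable def bump (S c x : ℝ) : ℝ := max (S ^ 2 - (x - c) ^ 2) 0

lemma continuous_bump (S c : ℝ) : Continuous (bump S c) := by
  unfold bump; fun_prop

lemma sq_sub_sum_bump_le_minSqDist {γ : Finset ℝ} (hγ : γ.Nonempty) (S x : ℝ) :
    S ^ 2 - ∑ c ∈ γ, bump S c x ≤ minSqDist γ x := by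
  obtain ⟨c, hc, hx⟩ := exists_minSqDist_eq hγ x
  have hsum : bump S c x ≤ ∑ c ∈ γ, bump S c x :=
    Finset.single_le_sum (f := fun c => bump S c x) (fun c _ => le_max_right _ _) hc
  have hcap : S ^ 2 - (x - c) ^ 2 ≤ bump S c x := le_max_left _ _
  linarith

lemma mul_sq_sub_sum_le_setIntegral_minSqDist {γ : Finset ℝ} (hγ : γ.Nonempty) {a b : ℝ}
    (hab : a ≤ b) (S : ℝ) :
    (b - a) * S ^ 2 - ∑ c ∈ γ, ∫ x in Icc a b, bump S c x ≤ ∫ x in Icc a b, minSqDist γ x := by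
  have hint : ∀ c, IntegrableOn (bump S c) (Icc a b) :=
    fun c => (continuous_bump S c).integrableOn_Icc
  calc (b - a) * S ^ 2 - ∑ c ∈ γ, ∫ x in Icc a b, bump S c x
      = ∫ x in Icc a b, (S ^ 2 - ∑ c ∈ γ, bump S c x) := by
        rw [integral_sub (integrable_const _) (integrable_finsetSum _ fun c _ => hint c),
          integral_finsetSum _ fun c _ => hint c, setIntegral_const,
          Real.volume_real_Icc_of_le hab, smul_eq_mul]
    _ ≤ ∫ x in Icc a b, minSqDist γ x :=
        setIntegral_mono_on
          (Continuous.integrableOn_Icc (by have := continuous_bump S; fun_prop))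
          (continuous_minSqDist hγ).integrableOn_Icc measurableSet_Icc
          fun x _ => sq_sub_sum_bump_le_minSqDist hγ S x

lemma integral_sub_sq (c p q : ℝ) :
    ∫ x in p..q, (x - c) ^ 2 = ((q - c) ^ 3 - (p - c) ^ 3) / 3 := by
  rw [intervalIntegral.integral_comp_sub_right (fun x => x ^ 2), integral_pow]
  ring

lemma setIntegral_bump_le_of_forall_notMem {a b c e S : ℝ} (hlo : c - S ≤ e) (hhi : e ≤ c + S)
    (hzero : ∀ x ∈ Icc a b, x ∉ Icc (c - S) e → bump S c x = 0) :
    ∫ x in Icc a b, bump S c x ≤ S ^ 2 * (e - c + S) - ((e - c) ^ 3 + S ^ 3) / 3 := by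
  calc ∫ x in Icc a b, bump S c x = ∫ x in Icc a b ∩ Icc (c - S) e, bump S c x :=
        setIntegral_eq_of_subset_of_forall_sdiff_eq_zero measurableSet_Icc inter_subset_left
          fun x hx => hzero x hx.1 fun h => hx.2 ⟨hx.1, h⟩
    _ ≤ ∫ x in Icc (c - S) e, bump S c x :=
        setIntegral_mono_set (continuous_bump S c).integrableOn_Icc
          (Eventually.of_forall fun x => le_max_right _ _) inter_subset_right.eventuallyLE
    _ = ∫ x in (c - S)..e, (S ^ 2 - (x - c) ^ 2) := by
        rw [intervalIntegral.integral_of_le hlo, ← integral_Icc_eq_integral_Ioc]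
        refine setIntegral_congr_fun measurableSet_Icc fun x hx => max_eq_left ?_
        nlinarith [hx.1, hx.2]
    _ = S ^ 2 * (e - c + S) - ((e - c) ^ 3 + S ^ 3) / 3 := by
        rw [intervalIntegral.integral_sub intervalIntegrable_const
          ((by fun_prop : Continuous fun x => (x - c) ^ 2).intervalIntegrable _ _), integral_sub_sq,
          intervalIntegral.integral_const, smul_eq_mul]
        ring

lemma setIntegral_bump_le (a b c : ℝ) {S : ℝ} (hS : 0 ≤ S) :
    ∫ x in Icc a b, bump S c x ≤ 4 / 3 * S ^ 3 := by
  refine (setIntegral_bump_le_of_forall_notMem (by linarith) le_rfl fun x _ hx => ?_).trans_eq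
    (by ring)
  refine max_eq_right ?_
  simp only [mem_Icc, not_and_or, not_le] at hx
  rcases hx with hx | hx <;> nlinarith

lemma setIntegral_bump_le_of_le_of_le (a : ℝ) {b c S : ℝ} (hbc : b ≤ c) (hcb : c ≤ b + S) :
    ∫ x in Icc a b, bump S c x ≤ 2 / 3 * S ^ 3 - S ^ 2 * (c - b) + (c - b) ^ 3 / 3 := by
  refine (setIntegral_bump_le_of_forall_notMem (e := b) (by linarith) (by linarith)
    fun x hx hx' => max_eq_right ?_).trans_eq (by ring)
  have : x < c - S := by
    by_contra! h
    exact hx' ⟨h, hx.2⟩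
  nlinarith

lemma setIntegral_bump_eq_zero (a : ℝ) {b c S : ℝ} (hS : 0 ≤ S) (hbc : b + S ≤ c) :
    ∫ x in Icc a b, bump S c x = 0 :=
  setIntegral_eq_zero_of_forall_eq_zero fun x hx => max_eq_right (by nlinarith [hx.2])

lemma sum_setIntegral_bump_le {s : Finset ℝ} {k : ℕ} (hk : s.card ≤ k) (a b : ℝ) {S : ℝ}
    (hS : 0 ≤ S) : ∑ c ∈ s, ∫ x in Icc a b, bump S c x ≤ 4 / 3 * k * S ^ 3 :=
  calc ∑ c ∈ s, ∫ x in Icc a b, bump S c x ≤ ∑ _c ∈ s, 4 / 3 * S ^ 3 :=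
        Finset.sum_le_sum fun c _ => setIntegral_bump_le a b c hS
    _ ≤ 4 / 3 * k * S ^ 3 := by
        rw [Finset.sum_const, nsmul_eq_mul]
        have : (s.card : ℝ) ≤ k := by exact_mod_cast hk
        nlinarith [pow_nonneg hS 3]

lemma sub_le_setIntegral_minSqDist_of_card_le {γ : Finset ℝ} (hγ : γ.Nonempty) {k : ℕ}
    (hk : γ.card ≤ k) {a b S : ℝ} (hab : a ≤ b) (hS : 0 ≤ S) :
    (b - a) * S ^ 2 - 4 / 3 * k * S ^ 3 ≤ ∫ x in Icc a b, minSqDist γ x := by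
  linarith [mul_sq_sub_sum_le_setIntegral_minSqDist hγ hab S, sum_setIntegral_bump_le hk a b hS]

lemma cube_div_le_setIntegral_minSqDist {γ : Finset ℝ} (hγ : γ.Nonempty) {k : ℕ}
    (hk : γ.card ≤ k) {a b : ℝ} (hab : a ≤ b) :
    (b - a) ^ 3 / (12 * k ^ 2) ≤ ∫ x in Icc a b, minSqDist γ x := by
  have hk0 : (0 : ℝ) < k := by exact_mod_cast hγ.card_pos.trans_le hk
  convert sub_le_setIntegral_minSqDist_of_card_le hγ hk hab
    (div_nonneg (sub_nonneg.2 hab) (by positivity : (0 : ℝ) ≤ 2 * k)) using 1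
  field_simp
  ring

lemma sub_le_setIntegral_minSqDist_of_gap {γ : Finset ℝ} (hγ : γ.Nonempty) {a b u S : ℝ} {k : ℕ}
    (hab : a ≤ b) (hS : 0 ≤ S) (hbu : b ≤ u) (hgap : ∀ c ∈ γ, c ≤ b ∨ u ≤ c)
    (hk : (γ.filter (· ≤ b)).card ≤ k) :
    (b - a) * S ^ 2 - 4 / 3 * k * S ^ 3 - (∫ x in Icc a b, bump S u x) ≤
      ∫ x in Icc a b, minSqDist γ x := by
  set L := γ.filter (· ≤ b)
  have hcloser : ∀ x ∈ Icc a b, minSqDist (insert u L) x ≤ minSqDist γ x := by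
    intro x hx
    obtain ⟨c, hc, hxc⟩ := exists_minSqDist_eq hγ x
    rw [hxc]
    rcases hgap c hc with hcb | huc
    · exact minSqDist_le (Finset.mem_insert_of_mem (Finset.mem_filter.2 ⟨hc, hcb⟩)) x
    · exact (minSqDist_le (Finset.mem_insert_self u L) x).trans (by nlinarith [hx.2])
  have hsum : ∑ c ∈ insert u L, ∫ x in Icc a b, bump S c x ≤
      (∫ x in Icc a b, bump S u x) + 4 / 3 * k * S ^ 3 := by
    have hL := sum_setIntegral_bump_le hk a b hS
    by_cases huL : u ∈ L
    · rw [Finset.insert_eq_of_mem huL]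
      linarith [setIntegral_nonneg (f := bump S u) (μ := volume) measurableSet_Icc
        fun x (_ : x ∈ Icc a b) => le_max_right (S ^ 2 - (x - u) ^ 2) 0]
    · rw [Finset.sum_insert huL]
      linarith
  have hmono : ∫ x in Icc a b, minSqDist (insert u L) x ≤ ∫ x in Icc a b, minSqDist γ x :=
    setIntegral_mono_on (continuous_minSqDist (Finset.insert_nonempty u L)).integrableOn_Icc
      (continuous_minSqDist hγ).integrableOn_Icc measurableSet_Icc hcloser
  linarith [mul_sq_sub_sum_le_setIntegral_minSqDist (Finset.insert_nonempty u L) hab S]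

lemma sub_le_setIntegral_minSqDist_of_card_filter_le {γ : Finset ℝ} (hγ : γ.Nonempty)
    {a b S : ℝ} {k : ℕ} (hab : a ≤ b) (hS : 0 ≤ S) (hk : (γ.filter (· ≤ b)).card ≤ k) :
    (b - a) * S ^ 2 - 4 / 3 * k * S ^ 3 - 2 / 3 * S ^ 3 ≤ ∫ x in Icc a b, minSqDist γ x := by
  have hG := sub_le_setIntegral_minSqDist_of_gap hγ hab hS le_rfl (fun c _ => le_total c b) hk
  have hb := setIntegral_bump_le_of_le_of_le a (le_refl b) (le_add_of_nonneg_right hS)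
  rw [sub_self] at hb
  linarith

lemma setIntegral_minSqDist_le_of_grid {γ : Finset ℝ} {a b : ℝ} (hab : a ≤ b) {m : ℕ}
    (hm : 0 < m) (hgrid : ∀ i < m, a + (2 * i + 1) * (b - a) / (2 * m) ∈ γ) :
    ∫ x in Icc a b, minSqDist γ x ≤ (b - a) ^ 3 / (12 * m ^ 2) := by
  have hγ : γ.Nonempty := ⟨_, hgrid 0 hm⟩
  have hm' : (0 : ℝ) < m := by exact_mod_cast hm
  set h := (b - a) / m
  have hcont := continuous_minSqDist hγ
  have hcell : ∀ i < m, ∫ x in (a + i * h)..(a + (i + 1) * h), minSqDist γ x ≤ h ^ 3 / 12 := by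
    intro i hi
    set p := a + (2 * i + 1) * (b - a) / (2 * m)
    have hle : a + i * h ≤ a + (i + 1) * h := by
      have : 0 ≤ h := div_nonneg (sub_nonneg.2 hab) hm'.le
      nlinarith
    calc ∫ x in (a + i * h)..(a + (i + 1) * h), minSqDist γ x
        ≤ ∫ x in (a + i * h)..(a + (i + 1) * h), (x - p) ^ 2 :=
          intervalIntegral.integral_mono_on hle (hcont.intervalIntegrable _ _)
            ((by fun_prop : Continuous fun x => (x - p) ^ 2).intervalIntegrable _ _)
            fun x _ => minSqDist_le (hgrid i hi) x
      _ = h ^ 3 / 12 := by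
          rw [integral_sub_sq]
          simp only [p, h]
          field_simp
          ring
  have hsplit := intervalIntegral.sum_integral_adjacent_intervals (μ := volume)
    (a := fun i : ℕ => a + i * h) (n := m) fun i _ => hcont.intervalIntegrable _ _
  have hend : a + (m : ℕ) * h = b := by simp only [h]; field_simp; ring
  simp only [Nat.cast_add, Nat.cast_one, Nat.cast_zero, zero_mul, add_zero, hend] at hsplit
  rw [integral_Icc_eq_integral_Ioc, ← intervalIntegral.integral_of_le hab, ← hsplit]
  calc ∑ i ∈ Finset.range m, ∫ x in (a + i * h)..(a + (i + 1) * h), minSqDist γ x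
      ≤ ∑ _i ∈ Finset.range m, h ^ 3 / 12 :=
        Finset.sum_le_sum fun i hi => hcell i (Finset.mem_range.1 hi)
    _ = (b - a) ^ 3 / (12 * m ^ 2) := by
        rw [Finset.sum_const, Finset.card_range, nsmul_eq_mul]
        simp only [h]
        field_simp

lemma isOptimalSet_and_quantErr_eq {P : Measure ℝ} {n : ℕ} {γ₀ : Finset ℝ} {v : ℝ}
    (h₀ : γ₀.Nonempty) (hcard : γ₀.card ≤ n) (hle : distortion P γ₀ ≤ v)
    (hge : ∀ γ : Finset ℝ, γ.Nonempty → γ.card ≤ n → v ≤ distortion P γ) :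
    IsOptimalSet P n γ₀ ∧ quantErr P n = v := by
  have hv : distortion P γ₀ = v := le_antisymm hle (hge γ₀ h₀ hcard)
  have hq : quantErr P n = v := by
    refine IsLeast.csInf_eq ⟨⟨γ₀, h₀, hcard, hv.symm⟩, ?_⟩
    rintro w ⟨γ, hγ, hγn, rfl⟩
    exact hge γ hγ hγn
  exact ⟨⟨h₀, hcard, hv.trans hq.symm⟩, hq⟩

lemma distortion_unif (γ : Finset ℝ) {a b : ℝ} (hab : a < b) :
    distortion (unif a b) γ = (b - a)⁻¹ * ∫ x in Icc a b, minSqDist γ x := by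
  rw [distortion_eq_integral, unif, integral_smul_measure, ENNReal.toReal_inv,
    ENNReal.toReal_ofReal (sub_nonneg.2 hab.le), smul_eq_mul]

lemma quantErr_unif {a b : ℝ} (hab : a < b) {m : ℕ} (hm : 0 < m) :
    quantErr (unif a b) m = (b - a) ^ 2 / (12 * m ^ 2) := by
  have hba : 0 < b - a := sub_pos.2 hab
  set grid := (Finset.range m).image fun i : ℕ => a + (2 * i + 1) * (b - a) / (2 * m)
  have hgrid : ∀ i < m, a + (2 * i + 1) * (b - a) / (2 * m) ∈ grid :=
    fun i hi => Finset.mem_image_of_mem _ (Finset.mem_range.2 hi)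
  refine (isOptimalSet_and_quantErr_eq (γ₀ := grid) ⟨_, hgrid 0 hm⟩
    (Finset.card_image_le.trans (Finset.card_range m).le) ?_ fun γ hγ hγm => ?_).2
  · rw [distortion_unif _ hab, inv_mul_le_iff₀ hba]
    exact (setIntegral_minSqDist_le_of_grid hab.le hm hgrid).trans_eq (by ring)
  · rw [distortion_unif _ hab, le_inv_mul_iff₀ hba]
    exact le_of_eq_of_le (by ring) (cube_div_le_setIntegral_minSqDist hγ hγm hab.le)

noncomputable def atomErr (γ : Finset ℝ) : ℝ :=
  minSqDist γ (2 / 3) + minSqDist γ (5 / 6) + minSqDist γ 1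

lemma distortion_mix_unif_discD (γ : Finset ℝ) (hγ : γ.Nonempty) :
    distortion (mix (unif 0 (1 / 2)) discD) γ =
      (∫ x in Icc 0 (1 / 2), minSqDist γ x) + atomErr γ / 6 := by
  have hdirac : ∀ a : ℝ, Integrable (minSqDist γ) (Measure.dirac a) :=
    fun a => integrable_dirac (by simp)
  have hD : Integrable (minSqDist γ) (Measure.dirac (2 / 3) + Measure.dirac (5 / 6)) :=
    (hdirac _).add_measure (hdirac _)
  have hU : Integrable (minSqDist γ) (unif 0 (1 / 2)) :=
    (continuous_minSqDist hγ).integrableOn_Icc.smul_measure (by simp)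
  have hDD : Integrable (minSqDist γ) discD :=
    (hD.add_measure (hdirac 1)).smul_measure (by simp)
  have hunif := distortion_unif γ (by norm_num : (0 : ℝ) < 1 / 2)
  rw [distortion_eq_integral] at hunif
  rw [distortion_eq_integral, mix, integral_add_measure (hU.smul_measure (by simp))
    (hDD.smul_measure (by simp)), integral_smul_measure, integral_smul_measure, hunif, discD,
    integral_smul_measure, integral_add_measure hD (hdirac 1),
    integral_add_measure (hdirac _) (hdirac _), integral_dirac, integral_dirac, integral_dirac,
    atomErr]
  norm_num [ENNReal.toReal_inv]
  ring

lemma atomErr_ge_or_exists_three_right {γ : Finset ℝ} (hγ : γ.Nonempty) :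
    1 / 72 ≤ atomErr γ ∨ ∃ c₁ ∈ γ, ∃ c₂ ∈ γ, ∃ c₃ ∈ γ,
      1 / 2 < c₁ ∧ c₁ < c₂ ∧ c₂ < c₃ ∧ (2 / 3 - c₁) ^ 2 ≤ atomErr γ := by
  obtain ⟨c₁, hc₁, h₁⟩ := exists_minSqDist_eq hγ (2 / 3)
  obtain ⟨c₂, hc₂, h₂⟩ := exists_minSqDist_eq hγ (5 / 6)
  obtain ⟨c₃, hc₃, h₃⟩ := exists_minSqDist_eq hγ 1
  have h₁₂ := le_of_minSqDist_eq (by norm_num) hc₁ hc₂ h₁ h₂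
  have h₂₃ := le_of_minSqDist_eq (by norm_num) hc₂ hc₃ h₂ h₃
  have hA : atomErr γ = (2 / 3 - c₁) ^ 2 + (5 / 6 - c₂) ^ 2 + (1 - c₃) ^ 2 := by
    rw [atomErr, h₁, h₂, h₃]
  by_cases hleft : c₁ ≤ 1 / 2
  · left; nlinarith [sq_nonneg (5 / 6 - c₂), sq_nonneg (1 - c₃)]
  rcases h₁₂.lt_or_eq with h₁₂ | rfl
  swap
  · left; nlinarith [sq_nonneg (c₁ - 3 / 4), sq_nonneg (1 - c₃)]
  rcases h₂₃.lt_or_eq with h₂₃ | rfl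
  swap
  · left; nlinarith [sq_nonneg (c₂ - 11 / 12), sq_nonneg (2 / 3 - c₁)]
  right
  exact ⟨c₁, hc₁, c₂, hc₂, c₃, hc₃, not_le.1 hleft, h₁₂, h₂₃,
    by nlinarith [sq_nonneg (5 / 6 - c₂), sq_nonneg (1 - c₃)]⟩

lemma one_div_le_setIntegral_of_card_filter_lt {γ : Finset ℝ} (hγ : γ.Nonempty) {m : ℕ}
    (hk : (γ.filter (· ≤ (1 / 2 : ℝ))).card < m) :
    1 / (96 * (m : ℝ) ^ 2) ≤ ∫ x in Icc 0 (1 / 2), minSqDist γ x := by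
  have hm : (0 : ℝ) < m := by exact_mod_cast (Nat.zero_le _).trans_lt hk
  have hk' : ((γ.filter (· ≤ (1 / 2 : ℝ))).card : ℝ) + 1 ≤ m := by exact_mod_cast hk
  set S := 1 / (4 * (m : ℝ))
  have hS : 0 < S := by positivity
  have hkey : S ^ 2 / 2 - 4 / 3 * m * S ^ 3 = 1 / (96 * m ^ 2) := by
    simp only [S]
    field_simp
    ring
  have := sub_le_setIntegral_minSqDist_of_card_filter_le (a := 0) (b := 1 / 2) hγ (by norm_num) hS.le le_rfl
  nlinarith [mul_le_mul_of_nonneg_right hk' (pow_pos hS 3).le]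

lemma one_div_le_setIntegral_add_atomErr_of_le_atomErr {γ : Finset ℝ} (hγ : γ.Nonempty)
    {m : ℕ} (hm : 2 ≤ m) (hcard : γ.card ≤ m + 3) (hA : 1 / 72 ≤ atomErr γ) :
    1 / (96 * (m : ℝ) ^ 2) ≤ (∫ x in Icc 0 (1 / 2), minSqDist γ x) + atomErr γ / 6 := by
  rcases (show m = 2 ∨ 3 ≤ m by omega) with rfl | hm3
  · have := sub_le_setIntegral_minSqDist_of_card_filter_le (a := 0) (b := 1 / 2) (S := 1 / 24) (k := 5) hγ
      (by norm_num) (by norm_num) ((Finset.card_filter_le _ _).trans hcard)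
    norm_num at this ⊢
    linarith
  · have hM3 : (3 : ℝ) ≤ m := by exact_mod_cast hm3
    have : 1 / (96 * (m : ℝ) ^ 2) ≤ 1 / 864 := by
      rw [div_le_div_iff₀ (by positivity) (by norm_num)]
      nlinarith
    linarith [setIntegral_nonneg (μ := volume) measurableSet_Icc
      fun x (_ : x ∈ Icc (0 : ℝ) (1 / 2)) => minSqDist_nonneg γ x]

lemma cube_poly_le_sq_div_six {S d : ℝ} (hd : 0 ≤ d) (hdS : d ≤ S) (hS : S ≤ 1 / 8) :
    2 / 3 * S ^ 3 - S ^ 2 * d + d ^ 3 / 3 ≤ (1 / 6 - d) ^ 2 / 6 :=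
  calc 2 / 3 * S ^ 3 - S ^ 2 * d + d ^ 3 / 3 ≤ 2 / 3 * S ^ 2 * (S - d) := by
        nlinarith [mul_nonneg hd (mul_nonneg (sub_nonneg.2 hdS) (add_nonneg hd (hd.trans hdS)))]
    _ ≤ (1 / 8 - d) / 96 := by
        nlinarith [mul_le_mul_of_nonneg_right (pow_le_pow_left₀ (hd.trans hdS) hS 2)
          (sub_nonneg.2 hdS)]
    _ ≤ (1 / 6 - d) ^ 2 / 6 := by nlinarith

lemma one_div_le_setIntegral_add_atomErr_of_gap {γ : Finset ℝ} (hγ : γ.Nonempty) {m : ℕ}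
    (hm : 2 ≤ m) {c₁ : ℝ} (h₁ : 1 / 2 < c₁) (hgap : ∀ c ∈ γ, c ≤ 1 / 2 ∨ c₁ ≤ c)
    (hk : (γ.filter (· ≤ (1 / 2 : ℝ))).card ≤ m) (hA : (2 / 3 - c₁) ^ 2 ≤ atomErr γ) :
    1 / (96 * (m : ℝ) ^ 2) ≤ (∫ x in Icc 0 (1 / 2), minSqDist γ x) + atomErr γ / 6 := by
  have hM : (2 : ℝ) ≤ m := by exact_mod_cast hm
  set S := 1 / (4 * (m : ℝ))
  have hS : 0 < S := by positivity
  have hkey : S ^ 2 / 2 - 4 / 3 * m * S ^ 3 = 1 / (96 * m ^ 2) := by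
    simp only [S]
    field_simp
    ring
  have hG := sub_le_setIntegral_minSqDist_of_gap (a := 0) hγ (by norm_num) hS.le h₁.le hgap hk
  by_cases hfar : 1 / 2 + S ≤ c₁
  · rw [setIntegral_bump_eq_zero 0 hS.le hfar] at hG
    nlinarith [sq_nonneg (2 / 3 - c₁)]
  rw [not_le] at hfar
  have hS8 : S ≤ 1 / 8 := by
    rw [div_le_div_iff₀ (by positivity) (by norm_num)]
    linarith
  have hbump := setIntegral_bump_le_of_le_of_le 0 h₁.le hfar.le
  have hcost := cube_poly_le_sq_div_six (d := c₁ - 1 / 2) (by linarith) (by linarith) hS8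
  rw [show (1 : ℝ) / 6 - (c₁ - 1 / 2) = 2 / 3 - c₁ by ring] at hcost
  linarith

lemma one_div_le_setIntegral_add_atomErr {γ : Finset ℝ} (hγ : γ.Nonempty) {m : ℕ} (hm : 2 ≤ m)
    (hcard : γ.card ≤ m + 3) :
    1 / (96 * (m : ℝ) ^ 2) ≤ (∫ x in Icc 0 (1 / 2), minSqDist γ x) + atomErr γ / 6 := by
  set k := (γ.filter (· ≤ (1 / 2 : ℝ))).card
  by_cases hkm : k < m
  · have hA : 0 ≤ atomErr γ := add_nonneg
      (add_nonneg (minSqDist_nonneg _ _) (minSqDist_nonneg _ _)) (minSqDist_nonneg _ _)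
    linarith [one_div_le_setIntegral_of_card_filter_lt hγ hkm]
  rcases atomErr_ge_or_exists_three_right hγ with
    hA | ⟨c₁, hc₁, c₂, hc₂, c₃, hc₃, h₁, h₁₂, h₂₃, hA⟩
  · exact one_div_le_setIntegral_add_atomErr_of_le_atomErr hγ hm hcard hA
  -- as `m ≤ k`, the centres right of `1/2` are exactly `c₁ < c₂ < c₃`
  set R := γ.filter fun c => ¬c ≤ (1 / 2 : ℝ)
  have hsub : ({c₁, c₂, c₃} : Finset ℝ) ⊆ R := by
    intro c hc
    simp only [Finset.mem_insert, Finset.mem_singleton] at hc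
    rcases hc with rfl | rfl | rfl <;> refine Finset.mem_filter.2 ⟨‹_›, ?_⟩ <;> linarith
  have h3 : ({c₁, c₂, c₃} : Finset ℝ).card = 3 :=
    Finset.card_eq_three.2 ⟨c₁, c₂, c₃, h₁₂.ne, (h₁₂.trans h₂₃).ne, h₂₃.ne, rfl⟩
  have hsplit : k + R.card = γ.card := Finset.card_filter_add_card_filter_not _
  have h3R := Finset.card_le_card hsub
  have hR : {c₁, c₂, c₃} = R := Finset.eq_of_subset_of_card_le hsub (by omega)
  refine one_div_le_setIntegral_add_atomErr_of_gap hγ hm h₁ (fun c hc => ?_) (by omega) hA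
  by_cases hcl : c ≤ 1 / 2
  · exact Or.inl hcl
  have : c ∈ ({c₁, c₂, c₃} : Finset ℝ) := hR ▸ Finset.mem_filter.2 ⟨hc, hcl⟩
  simp only [Finset.mem_insert, Finset.mem_singleton] at this
  rcases this with rfl | rfl | rfl <;> right <;> linarith

lemma isOptimalSet_mix_and_quantErr_eq {m : ℕ} (hm : 2 ≤ m) :
    IsOptimalSet (mix (unif 0 (1 / 2)) discD) (m + 3)
      ((Finset.image (fun i : ℕ => (2 * (i : ℝ) + 1) / (4 * (m : ℝ))) (Finset.range m)) ∪
        ({2 / 3, 5 / 6, 1} : Finset ℝ)) ∧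
    quantErr (mix (unif 0 (1 / 2)) discD) (m + 3) = 1 / (96 * (m : ℝ) ^ 2) := by
  set grid := Finset.image (fun i : ℕ => (2 * (i : ℝ) + 1) / (4 * (m : ℝ))) (Finset.range m)
  set D : Finset ℝ := {2 / 3, 5 / 6, 1}
  have hgrid : ∀ i < m, (0 : ℝ) + (2 * (i : ℝ) + 1) * (1 / 2 - 0) / (2 * m) ∈ grid ∪ D := by
    intro i hi
    refine Finset.mem_union_left _ ?_
    rw [show (0 : ℝ) + (2 * i + 1) * (1 / 2 - 0) / (2 * m) = (2 * i + 1) / (4 * m) by ring]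
    exact Finset.mem_image_of_mem _ (Finset.mem_range.2 hi)
  have hne : (grid ∪ D).Nonempty := ⟨_, hgrid 0 (by omega)⟩
  refine isOptimalSet_and_quantErr_eq hne ?_ ?_ fun γ hγ hγm =>
    (distortion_mix_unif_discD γ hγ).symm ▸ one_div_le_setIntegral_add_atomErr hγ hm hγm
  · exact (Finset.card_union_le _ _).trans
      (add_le_add (Finset.card_image_le.trans (Finset.card_range m).le) Finset.card_le_three)
  · have hatom : ∀ x ∈ D, minSqDist (grid ∪ D) x = 0 := fun x hx =>
      le_antisymm ((minSqDist_le (Finset.mem_union_right grid hx) x).trans_eq (by ring))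
        (minSqDist_nonneg _ x)
    rw [distortion_mix_unif_discD _ hne, atomErr, hatom _ (by simp [D]), hatom _ (by simp [D]),
      hatom _ (by simp [D])]
    exact le_of_eq_of_le (by ring)
      ((setIntegral_minSqDist_le_of_grid (by norm_num) (by omega) hgrid).trans_eq (by ring))

theorem stmt5 (P : Measure ℝ) (hP : P = mix (unif 0 (1/2)) discD)
    (n : ℕ) (hn : 5 ≤ n) :
    IsOptimalSet P n
      ((Finset.image (fun i : ℕ => (2 * (i : ℝ) + 1) / (4 * ((n : ℝ) - 3)))
          (Finset.range (n - 3))) ∪ ({2/3, 5/6, 1} : Finset ℝ)) ∧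
    quantErr P n = (1/2) * quantErr (unif 0 (1/2)) (n - 3) ∧
    quantErr P n = 1 / (96 * ((n : ℝ) - 3) ^ 2) := by
  obtain ⟨m, rfl⟩ : ∃ m, n = m + 3 := ⟨n - 3, by omega⟩
  have hcast : ((m + 3 : ℕ) : ℝ) - 3 = m := by push_cast; ring
  rw [hcast, Nat.add_sub_cancel, hP]
  obtain ⟨hopt, hq⟩ := isOptimalSet_mix_and_quantErr_eq (by omega : 2 ≤ m)
  refine ⟨hopt, ?_, hq⟩
  rw [hq, quantErr_unif (by norm_num) (by omega)]
  ring
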